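/- Let G be a finite graph with odd maximum degree Δ(G) ≥ 3 such that the number of vertices of G attaining the maximum degree is odd. Then for every orientation D of G there exists a tournament T with f_T(D) ≠ f_T(−D). -/

import Mathlib

open Finset Polynomial

/-- An oriented graph: loopless, at most one arc between any pair of vertices. -/
def IsOrgraph {V : Type*} (A : V → V → Prop) : Prop :=
  ∀ u v, A u v → u ≠ v ∧ ¬ A v u

/-- A tournament: loopless, exactly one arc between any two distinct vertices. -/
def IsTournament {W : Type*} (B : W → W → Prop) : Prop :=
  (∀ v, ¬ B v v) ∧ ∀ u v, u ≠ v → (B u v ↔ ¬ B v u)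

/-- The number of subdigraphs of `B` isomorphic to `A`: a subdigraph is a pair of a
vertex set and an arc relation contained in `B` with all endpoints in the vertex set. -/
noncomputable def copyCount {V W : Type*} (A : V → V → Prop) (B : W → W → Prop) : ℕ :=
  Nat.card {p : Set W × (W → W → Prop) //
    (∀ a b, p.2 a b → B a b ∧ a ∈ p.1 ∧ b ∈ p.1) ∧
    ∃ e : V ≃ p.1, ∀ a b, A a b ↔ p.2 (e a : W) (e b : W)}

/-- `A` is converse invariant: every finite tournament contains as many copies of `A`
as of its converse. -/
def ConverseInvariant {V : Type*} (A : V → V → Prop) : Prop :=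
  ∀ (W : Type) (_ : Fintype W) (B : W → W → Prop), IsTournament B →
    copyCount A B = copyCount (fun a b => A b a) B

/-- Out-degree. -/
noncomputable def outDeg {V : Type*} (A : V → V → Prop) (u : V) : ℕ :=
  Nat.card {v // A u v}

/-- In-degree. -/
noncomputable def inDeg {V : Type*} (A : V → V → Prop) (u : V) : ℕ :=
  Nat.card {v // A v u}

/-- The polynomial `P_D(x) = ∑_u (1+x)^{d⁺(u)} (1-x)^{d⁻(u)}`. -/
noncomputable def degPoly {V : Type*} [Fintype V] (A : V → V → Prop) : Polynomial ℤ :=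
  ∑ u : V, (1 + X) ^ outDeg A u * (1 - X) ^ inDeg A u

/-- `A` is an orientation of the simple graph `G`. -/
def IsOrientation {V : Type*} (G : SimpleGraph V) (A : V → V → Prop) : Prop :=
  (∀ u v, A u v → ¬ A v u) ∧ ∀ u v, G.Adj u v ↔ (A u v ∨ A v u)

/-!
Counting arc-preserving embeddings instead of copies multiplies by `|Aut D| = |Aut (-D)|`, so
converse invariance makes `D` and `-D` have equally many embeddings into every tournament.
Average these counts over the random tournament on `|V| + 1` vertices in which an extra vertex `⊥`
beats each other vertex with probability `(1 + x) / 2` and every other pair is a fair coin: an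
embedding sending `u` to `⊥` contributes `(1 + x) ^ d⁺(u) * (1 - x) ^ d⁻(u)`, up to factors common
to `D` and `-D`, hence `P_D = P_{-D}`. For odd `Δ` the coefficient of `X ^ Δ` in `P_{-D}` is minus
that in `P_D`, which is a sum of an odd number of signs, hence nonzero.
-/

section Copies

variable {V W : Type*} (A : V → V → Prop) (B : W → W → Prop)

abbrev ArcEmbedding := {e : V ↪ W // ∀ a b, A a b → B (e a) (e b)}

/-- The type whose cardinality is `copyCount A B`. -/
abbrev Copy := {p : Set W × (W → W → Prop) //
    (∀ a b, p.2 a b → B a b ∧ a ∈ p.1 ∧ b ∈ p.1) ∧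
    ∃ e : V ≃ p.1, ∀ a b, A a b ↔ p.2 (e a : W) (e b : W)}

variable {A B}

def ArcEmbedding.copy (e : ArcEmbedding A B) : Copy A B :=
  ⟨(Set.range e.1, Relation.Map A e.1 e.1),
    fun _ _ ⟨a, b, hab, hx, hy⟩ => hx ▸ hy ▸ ⟨e.2 a b hab, ⟨a, rfl⟩, ⟨b, rfl⟩⟩,
    Equiv.ofInjective e.1 e.1.injective,
    fun a b => (Relation.map_apply_apply e.1.injective e.1.injective A a b).symm⟩

theorem ArcEmbedding.copy_eq_of_equiv (e : ArcEmbedding A B) {c : Copy A B} (φ : V ≃ c.1.1)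
    (hφ : ∀ a b, A a b ↔ c.1.2 (φ a) (φ b)) (he : ∀ a, e.1 a = φ a) : e.copy = c := by
  revert φ
  obtain ⟨⟨S, R⟩, hsub, -⟩ := c
  intro φ hφ he
  dsimp only at φ hφ he hsub
  refine Subtype.ext (Prod.ext (Set.ext fun x => ⟨?_, fun hx => ?_⟩)
    (funext₂ fun x y => propext ⟨?_, fun hxy => ?_⟩))
  · rintro ⟨a, rfl⟩
    exact he a ▸ (φ a).2
  · exact ⟨φ.symm ⟨x, hx⟩, by simp [he]⟩
  · rintro ⟨a, b, hab, rfl, rfl⟩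
    rw [he, he]
    exact (hφ a b).1 hab
  · obtain ⟨-, hx, hy⟩ := hsub x y hxy
    exact ⟨φ.symm ⟨x, hx⟩, φ.symm ⟨y, hy⟩, (hφ _ _).2 (by simpa using hxy), by simp [he],
      by simp [he]⟩

theorem card_fiber_copy [Finite V] (c : Copy A B) :
    Nat.card {e : ArcEmbedding A B // e.copy = c} = Nat.card (A ≃r A) := by
  obtain ⟨⟨S, R⟩, hsub, e₀, he₀⟩ := c
  dsimp only at hsub e₀ he₀
  let f (g : A ≃r A) : V ↪ W :=
    (g.toEquiv.trans e₀).toEmbedding.trans (Function.Embedding.subtype _)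
  have hR (g : A ≃r A) (a b : V) : A a b ↔ R (f g a) (f g b) :=
    g.map_rel_iff.symm.trans (he₀ (g a) (g b))
  symm
  refine Nat.card_eq_of_bijective (fun g => ⟨⟨f g, fun a b hab => (hsub _ _ ((hR g a b).1 hab)).1⟩,
    ArcEmbedding.copy_eq_of_equiv _ (g.toEquiv.trans e₀) (hR g) fun _ => rfl⟩) ⟨?_, ?_⟩
  · intro g g' h
    ext a
    exact e₀.injective (Subtype.ext (congrArg (fun e : {e : ArcEmbedding A B // _} => e.1.1 a) h))
  · rintro ⟨e, he⟩
    have hS : Set.range e.1 = S := congrArg (·.1.1) he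
    have hRe : Relation.Map A e.1 e.1 = R := congrArg (·.1.2) he
    have hmem (a : V) : e.1 a ∈ S := hS ▸ ⟨a, rfl⟩
    let g₀ (a : V) : V := e₀.symm ⟨e.1 a, hmem a⟩
    have he₀g₀ (a : V) : (e₀ (g₀ a) : W) = e.1 a := by simp [g₀]
    have hg₀ : g₀.Bijective := Finite.injective_iff_bijective.1 fun a b h =>
      e.1.injective (by rw [← he₀g₀, h, he₀g₀])
    refine ⟨⟨Equiv.ofBijective g₀ hg₀, fun {a b} => ?_⟩, Subtype.ext (Subtype.ext ?_)⟩
    · simp only [Equiv.ofBijective_apply]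
      rw [he₀, he₀g₀, he₀g₀, ← hRe, Relation.map_apply_apply e.1.injective e.1.injective]
    · ext a
      exact he₀g₀ a

theorem card_arcEmbedding [Finite V] [Finite W] :
    Nat.card (ArcEmbedding A B) = copyCount A B * Nat.card (A ≃r A) := by
  have := Fintype.ofFinite (Copy A B)
  rw [← Nat.card_congr (Equiv.sigmaFiberEquiv ArcEmbedding.copy), Nat.card_sigma]
  simp [card_fiber_copy, copyCount]

theorem card_arcEmbedding_eq_card_arcEmbedding_swap [Finite V] [Finite W]
    (h : copyCount A B = copyCount (fun a b => A b a) B) :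
    Nat.card (ArcEmbedding A B) = Nat.card (ArcEmbedding (fun a b => A b a) B) := by
  rw [card_arcEmbedding, card_arcEmbedding, h,
    Nat.card_congr ⟨RelIso.swap, RelIso.swap, fun _ => rfl, fun _ => rfl⟩]

end Copies

theorem sum_prod_mul_ite_forall_eq {ι α R : Type*} [Fintype ι] [DecidableEq ι]
    [CommSemiring R] (φ : ι → Bool → R) (hφ : ∀ i, φ i true + φ i false = 1) (s : Finset α)
    (k : α → ι) (hk : Set.InjOn k s) (b : α → Bool) :
    ∑ t : ι → Bool, (∏ i, φ i (t i)) * (if ∀ p ∈ s, t (k p) = b p then 1 else 0) =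
      ∏ p ∈ s, φ (k p) (b p) := by
  set ψ : ι → Bool → R := fun i β => φ i β * if ∀ p ∈ s, k p = i → β = b p then 1 else 0
  have hψ (t : ι → Bool) :
      (∏ i, φ i (t i)) * (if ∀ p ∈ s, t (k p) = b p then 1 else 0) = ∏ i, ψ i (t i) := by
    rw [prod_mul_distrib, Fintype.prod_boole]
    congr 2
    exact propext ⟨fun h i p hp hpi => hpi ▸ h p hp, fun h p hp => h _ p hp rfl⟩
  have hψ_out (i : ι) (hi : i ∉ s.image k) : ∑ β, ψ i β = 1 := by
    have (β : Bool) : ∀ p ∈ s, k p = i → β = b p := fun p hp hpi =>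
      absurd (mem_image_of_mem k hp) (hpi ▸ hi)
    simp only [ψ, Fintype.sum_bool, if_pos (this _), mul_one, hφ]
  have hψ_in (p : α) (hp : p ∈ s) : ∑ β, ψ (k p) β = φ (k p) (b p) := by
    have (β : Bool) : (∀ q ∈ s, k q = k p → β = b q) ↔ β = b p :=
      ⟨fun h => h p hp rfl, fun h q hq hqp => hk hq hp hqp ▸ h⟩
    cases hb : b p <;> simp [ψ, this, hb]
  rw [sum_congr rfl fun t _ => hψ t, ← Fintype.prod_sum,
    ← prod_subset (subset_univ (s.image k)) fun i _ hi => hψ_out i hi, prod_image hk]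
  exact prod_congr rfl hψ_in

section Arcs

variable {V : Type*} [Fintype V] {A : V → V → Prop}

open Classical in
noncomputable def arcs (A : V → V → Prop) : Finset (V × V) := {p | A p.1 p.2}

theorem mem_arcs {p : V × V} : p ∈ arcs A ↔ A p.1 p.2 := by
  simp [arcs]

theorem card_arcs_swap : #(arcs fun a b => A b a) = #(arcs A) :=
  card_equiv (Equiv.prodComm V V) fun p => by simp [mem_arcs]

open Classical in
theorem card_filter_fst_arcs (a : V) : #{p ∈ arcs A | p.1 = a} = outDeg A a := by
  rw [outDeg, Nat.card_eq_fintype_card, Fintype.card_subtype]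
  refine card_nbij' Prod.snd (fun b => (a, b)) ?_ ?_ ?_ ?_ <;> intro p <;> simp [mem_arcs] <;> aesop

open Classical in
theorem card_filter_snd_arcs (b : V) : #{p ∈ arcs A | p.2 = b} = inDeg A b := by
  rw [inDeg, Nat.card_eq_fintype_card, Fintype.card_subtype]
  refine card_nbij' Prod.fst (fun a => (a, b)) ?_ ?_ ?_ ?_ <;> intro p <;> simp [mem_arcs] <;> aesop

theorem prod_arcs_fst {M : Type*} [CommMonoid M] (F : V → M) :
    ∏ p ∈ arcs A, F p.1 = ∏ a, F a ^ outDeg A a := by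
  classical
  rw [← prod_fiberwise (arcs A) Prod.fst]
  refine prod_congr rfl fun a _ => ?_
  rw [prod_congr rfl fun p hp => congrArg F (mem_filter.1 hp).2, prod_const, card_filter_fst_arcs]

theorem prod_arcs_snd {M : Type*} [CommMonoid M] (F : V → M) :
    ∏ p ∈ arcs A, F p.2 = ∏ b, F b ^ inDeg A b := by
  classical
  rw [← prod_fiberwise (arcs A) Prod.snd]
  refine prod_congr rfl fun b _ => ?_
  rw [prod_congr rfl fun p hp => congrArg F (mem_filter.1 hp).2, prod_const, card_filter_snd_arcs]

end Arcs

theorem prod_ite_embedding_apply_eq {V W R : Type*} [Fintype V] [DecidableEq W] [CommSemiring R]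
    (e : V ↪ W) (w : W) (c : V → R) :
    ∏ a, (if e a = w then c a else 1) =
      (if ∀ a, e a ≠ w then 1 else 0) + ∑ u, if e u = w then c u else 0 := by
  by_cases h : ∃ u, e u = w
  · obtain ⟨u, hu⟩ := h
    have hne (a : V) (ha : a ≠ u) : e a ≠ w := fun h => ha (e.injective (h.trans hu.symm))
    rw [Fintype.prod_eq_single u fun a ha => if_neg (hne a ha),
      Fintype.sum_eq_single u fun a ha => if_neg (hne a ha),
      if_neg (show ¬∀ a, e a ≠ w from fun h => h u hu)]
    simp [hu]
  · simp_all

section Embeddings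

variable {V W : Type*} [Fintype V] [DecidableEq V] [Fintype W] [DecidableEq W]

theorem card_filter_embedding_apply_eq (u u' : V) (w : W) :
    #{e : V ↪ W | e u = w} = #{e : V ↪ W | e u' = w} :=
  card_equiv (Equiv.embeddingCongr (Equiv.swap u u') (Equiv.refl W)) fun e => by
    simp [Function.Embedding.congr_apply]

theorem card_filter_embedding_apply_eq_pos (h : Fintype.card V < Fintype.card W) (u : V) (w : W) :
    0 < #{e : V ↪ W | e u = w} := by
  obtain ⟨f⟩ : Nonempty (V ↪ {x // x ≠ w}) :=
    Function.Embedding.nonempty_of_card_le (by simp [Fintype.card_subtype_compl]; omega)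
  refine card_pos.2 ⟨⟨fun v => if v = u then w else f v, fun a b hab => ?_⟩, by simp⟩
  by_cases ha : a = u <;> by_cases hb : b = u <;> simp only [ha, hb, if_true, if_false] at hab
  · exact ha.trans hb.symm
  · exact absurd hab.symm (f b).2
  · exact absurd hab (f a).2
  · exact f.injective (Subtype.ext hab)

end Embeddings

section LinearOrder

variable {W : Type*} [LinearOrder W]

/-- The tournament in which the pair `z` points upwards in the order of `W` iff `t z`. -/
def tournamentOf (t : Sym2 W → Bool) (a b : W) : Prop :=
  a ≠ b ∧ t s(a, b) = decide (a < b)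

theorem isTournament_tournamentOf (t : Sym2 W → Bool) : IsTournament (tournamentOf t) := by
  refine ⟨fun v h => h.1 rfl, fun u v huv => ?_⟩
  rcases huv.lt_or_gt with h | h <;>
    simp [tournamentOf, huv, huv.symm, Sym2.eq_swap, h, h.not_gt]

variable [OrderBot W]

def pairWeight (x : ℚ) (z : Sym2 W) (β : Bool) : ℚ :=
  if ⊥ ∈ z then (if β then 1 + x else 1 - x) / 2 else 1 / 2

theorem pairWeight_true_add_false (x : ℚ) (z : Sym2 W) :
    pairWeight x z true + pairWeight x z false = 1 := by
  simp only [pairWeight, if_true, Bool.false_eq_true, if_false]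
  split_ifs <;> ring

theorem pairWeight_arc (x : ℚ) {a b : W} (hab : a ≠ b) :
    pairWeight x s(a, b) (decide (a < b)) =
      (if a = ⊥ then 1 + x else 1) * (if b = ⊥ then 1 - x else 1) / 2 := by
  by_cases ha : a = ⊥
  · subst ha
    simp [pairWeight, bot_lt_iff_ne_bot, hab.symm]
  by_cases hb : b = ⊥
  · subst hb
    simp [pairWeight, ha]
  · simp [pairWeight, ha, hb, Ne.symm ha, Ne.symm hb]

variable [Fintype W]

def tournamentWeight (x : ℚ) (t : Sym2 W → Bool) : ℚ :=
  ∏ z, pairWeight x z (t z)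

end LinearOrder

section WeightedCount

variable {V W : Type*} [Fintype V] [LinearOrder W] {A : V → V → Prop}

theorem forall_tournamentOf_iff (hA : ∀ a b, A a b → ¬ A b a) (t : Sym2 W → Bool) (e : V ↪ W) :
    (∀ a b, A a b → tournamentOf t (e a) (e b)) ↔
      ∀ p ∈ arcs A, t s(e p.1, e p.2) = decide (e p.1 < e p.2) := by
  have hne {a b : V} (hab : A a b) : e a ≠ e b := e.injective.ne fun h => hA a b hab (h ▸ h ▸ hab)
  exact ⟨fun h p hp => (h p.1 p.2 (mem_arcs.1 hp)).2,
    fun h a b hab => ⟨hne hab, h (a, b) (mem_arcs.2 hab)⟩⟩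

variable [DecidableEq V] [Fintype W] [OrderBot W]

theorem sum_tournamentWeight_mul_ite (hA : ∀ a b, A a b → ¬ A b a) (x : ℚ) (e : V ↪ W) :
    ∑ t : Sym2 W → Bool, tournamentWeight x t *
        (if ∀ p ∈ arcs A, t s(e p.1, e p.2) = decide (e p.1 < e p.2) then 1 else 0) =
      (1 / 2) ^ #(arcs A) *
        ∏ a, if e a = ⊥ then (1 + x) ^ outDeg A a * (1 - x) ^ inDeg A a else 1 := by
  have hne {p : V × V} (hp : p ∈ arcs A) : e p.1 ≠ e p.2 :=
    e.injective.ne fun h => hA _ _ (mem_arcs.1 hp) (h ▸ h ▸ mem_arcs.1 hp)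
  have hinj : Set.InjOn (fun p : V × V => s(e p.1, e p.2)) (arcs A) := by
    intro p hp q hq h
    rcases Sym2.eq_iff.1 h with ⟨h₁, h₂⟩ | ⟨h₁, h₂⟩
    · exact Prod.ext (e.injective h₁) (e.injective h₂)
    · have hpq := mem_arcs.1 hp
      rw [e.injective h₁, e.injective h₂] at hpq
      exact absurd hpq (hA _ _ (mem_arcs.1 hq))
  have key := sum_prod_mul_ite_forall_eq _ (pairWeight_true_add_false x) _ _ hinj
    fun p => decide (e p.1 < e p.2)
  -- `congr!` reconciles the two `Decidable` instances of the condition in the indicator.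
  refine (Eq.trans (by unfold tournamentWeight; congr!) key).trans ?_
  rw [prod_congr rfl fun p hp => pairWeight_arc x (hne hp), prod_div_distrib, prod_mul_distrib,
    prod_arcs_fst (fun a => if e a = ⊥ then 1 + x else 1),
    prod_arcs_snd (fun a => if e a = ⊥ then 1 - x else 1), ← prod_mul_distrib, prod_const,
    div_eq_mul_inv, mul_comm, one_div, inv_pow]
  congr 1
  refine prod_congr rfl fun a _ => ?_
  split_ifs <;> simp

theorem sum_tournamentWeight_mul_card_arcEmbedding (hA : ∀ a b, A a b → ¬ A b a) (x : ℚ)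
    (u₀ : V) :
    ∑ t : Sym2 W → Bool, tournamentWeight x t * Nat.card (ArcEmbedding A (tournamentOf t)) =
      (1 / 2) ^ #(arcs A) *
        (#{e : V ↪ W | ∀ a, e a ≠ ⊥} + #{e : V ↪ W | e u₀ = ⊥} * aeval x (degPoly A)) := by
  have hcard (t : Sym2 W → Bool) : (Nat.card (ArcEmbedding A (tournamentOf t)) : ℚ) =
      ∑ e : V ↪ W, if ∀ p ∈ arcs A, t s(e p.1, e p.2) = decide (e p.1 < e p.2) then 1 else 0 := by
    rw [Nat.card_congr (Equiv.subtypeEquivRight fun e => forall_tournamentOf_iff hA t e),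
      Nat.card_eq_fintype_card, Fintype.card_subtype, card_filter]
    push_cast
    rfl
  simp_rw [hcard, mul_sum]
  rw [sum_comm]
  simp_rw [sum_tournamentWeight_mul_ite hA, prod_ite_embedding_apply_eq, ← mul_sum, sum_add_distrib]
  rw [sum_boole, sum_comm]
  simp_rw [← sum_filter, sum_const, nsmul_eq_mul, card_filter_embedding_apply_eq _ u₀, ← mul_sum]
  simp [degPoly]

end WeightedCount

theorem degPoly_eq_degPoly_swap_of_converseInvariant {V : Type} [Fintype V] {A : V → V → Prop}
    (hA : ∀ a b, A a b → ¬ A b a) (hCI : ConverseInvariant A) (u₀ : V) :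
    degPoly A = degPoly fun a b => A b a := by
  classical
  let W := WithBot (Fin (Fintype.card V))
  have hN : (#{e : V ↪ W | e u₀ = ⊥} : ℚ) ≠ 0 :=
    Nat.cast_ne_zero.2 (card_filter_embedding_apply_eq_pos (by simp [W, WithBot]) u₀ ⊥).ne'
  have heval (x : ℚ) : aeval x (degPoly A) = aeval x (degPoly fun a b => A b a) := by
    have h : ∑ t : Sym2 W → Bool, tournamentWeight x t * Nat.card (ArcEmbedding A (tournamentOf t))
        = ∑ t : Sym2 W → Bool,
          tournamentWeight x t * Nat.card (ArcEmbedding (fun a b => A b a) (tournamentOf t)) :=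
      sum_congr rfl fun t _ => by rw [card_arcEmbedding_eq_card_arcEmbedding_swap
        (hCI W inferInstance _ (isTournament_tournamentOf t))]
    rw [sum_tournamentWeight_mul_card_arcEmbedding hA x u₀,
      sum_tournamentWeight_mul_card_arcEmbedding (A := fun a b => A b a)
        (fun a b h h' => hA a b h' h) x u₀, card_arcs_swap] at h
    exact mul_left_cancel₀ hN (add_left_cancel (mul_left_cancel₀ (by positivity) h))
  apply map_injective (algebraMap ℤ ℚ) (RingHom.injective_int _)
  exact Polynomial.funext fun x => by simpa [aeval_def, eval_map] using heval x

theorem coeff_one_add_X_pow_mul_one_sub_X_pow {m n Δ : ℕ} (h : m + n ≤ Δ) :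
    ((1 + X : ℤ[X]) ^ m * (1 - X) ^ n).coeff Δ = if m + n = Δ then (-1) ^ n else 0 := by
  have hm : ((1 + X : ℤ[X]) ^ m).natDegree ≤ m := by compute_degree
  have hn : ((1 - X : ℤ[X]) ^ n).natDegree ≤ n := by compute_degree
  split_ifs with hΔ
  · subst hΔ
    have hsub := coeff_pow_of_natDegree_le (m := n) (show (1 - X : ℤ[X]).natDegree ≤ 1 by
      compute_degree)
    rw [coeff_mul_add_eq_of_natDegree_le hm hn, coeff_one_add_X_pow, Nat.choose_self]
    simpa [coeff_one] using hsub
  · exact coeff_eq_zero_of_natDegree_lt ((natDegree_mul_le_of_le hm hn).trans_lt (by omega))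

theorem coeff_degPoly {V : Type*} [Fintype V] {A : V → V → Prop} {Δ : ℕ}
    (h : ∀ u, outDeg A u + inDeg A u ≤ Δ) :
    (degPoly A).coeff Δ = ∑ u with outDeg A u + inDeg A u = Δ, (-1) ^ inDeg A u := by
  simp_rw [degPoly, finsetSum_coeff, coeff_one_add_X_pow_mul_one_sub_X_pow (h _), sum_ite,
    sum_const_zero, add_zero]

theorem Finset.sum_neg_one_pow_ne_zero {ι : Type*} {s : Finset ι} (hs : Odd #s) (f : ι → ℕ) :
    ∑ i ∈ s, (-1 : ℤ) ^ f i ≠ 0 := by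
  intro h
  have hcast := congrArg (Int.cast : ℤ → ZMod 2) h
  push_cast [show (-1 : ZMod 2) = 1 from rfl, one_pow, sum_const, nsmul_one] at hcast
  exact Nat.not_even_iff_odd.2 hs (ZMod.natCast_eq_zero_iff_even.1 hcast)

theorem neg_one_pow_eq_neg_neg_one_pow_of_odd_add {R : Type*} [Monoid R] [HasDistribNeg R]
    {m n : ℕ} (h : Odd (m + n)) : (-1 : R) ^ m = -(-1) ^ n :=
  calc (-1 : R) ^ m = (-1) ^ (m + n) * (-1) ^ n := by
        rw [← pow_add, add_assoc, ← two_mul, pow_add, (even_two_mul n).neg_one_pow, mul_one]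
    _ = -(-1) ^ n := by rw [h.neg_one_pow, neg_one_mul]

theorem inDeg_swap {V : Type*} (A : V → V → Prop) (v : V) :
    inDeg (fun a b => A b a) v = outDeg A v := rfl

section Orientation

variable {V : Type*} {G : SimpleGraph V} {A : V → V → Prop}

theorem IsOrientation.swap (h : IsOrientation G A) : IsOrientation G fun a b => A b a :=
  ⟨fun u v huv hvu => h.1 v u huv hvu, fun u v => (h.2 u v).trans or_comm⟩

theorem IsOrientation.outDeg_add_inDeg [Fintype V] [DecidableRel G.Adj]
    (h : IsOrientation G A) (v : V) : outDeg A v + inDeg A v = G.degree v := by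
  classical
  rw [← G.card_neighborSet_eq_degree, ← Nat.card_eq_fintype_card, outDeg, inDeg, ← Nat.card_sum]
  exact Nat.card_congr ((subtypeOrEquiv _ _
    (Pi.disjoint_iff.2 fun w => Prop.disjoint_iff.2 fun ⟨h₁, h₂⟩ => h.1 _ _ h₁ h₂)).symm.trans
    (Equiv.subtypeEquivRight fun w => (h.2 v w).symm))

theorem IsOrientation.coeff_degPoly_maxDegree [Fintype V] [DecidableRel G.Adj]
    (h : IsOrientation G A) :
    (degPoly A).coeff G.maxDegree = ∑ v with G.degree v = G.maxDegree, (-1) ^ inDeg A v := by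
  simp_rw [coeff_degPoly fun u => h.outDeg_add_inDeg u ▸ G.degree_le_maxDegree u,
    h.outDeg_add_inDeg]

end Orientation

theorem stmt_10_general {V : Type} [Fintype V]
    (G : SimpleGraph V) [DecidableRel G.Adj]
    (hΔodd : Odd G.maxDegree)
    (hodd : Odd (Finset.univ.filter fun v => G.degree v = G.maxDegree).card)
    (A : V → V → Prop) (hor : IsOrientation G A) :
    ¬ ConverseInvariant A := by
  intro hCI
  obtain ⟨u₀, -⟩ := card_pos.1 hodd.pos
  have hcoeff := congrArg (coeff · G.maxDegree)
    (degPoly_eq_degPoly_swap_of_converseInvariant hor.1 hCI u₀)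
  simp only [hor.coeff_degPoly_maxDegree, hor.swap.coeff_degPoly_maxDegree, inDeg_swap] at hcoeff
  have hflip : ∑ v with G.degree v = G.maxDegree, (-1 : ℤ) ^ outDeg A v =
      -∑ v with G.degree v = G.maxDegree, (-1 : ℤ) ^ inDeg A v := by
    rw [← sum_neg_distrib]
    refine sum_congr rfl fun v hv => ?_
    refine neg_one_pow_eq_neg_neg_one_pow_of_odd_add ?_
    rwa [hor.outDeg_add_inDeg, (mem_filter.1 hv).2]
  exact sum_neg_one_pow_ne_zero hodd (inDeg A) (by linarith)

/-- If `G` has odd maximum degree at least 3 attained by an odd number of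
vertices, then no orientation of `G` is converse invariant. -/
theorem stmt_10 {V : Type} [Fintype V] [DecidableEq V]
    (G : SimpleGraph V) [DecidableRel G.Adj]
    (hΔodd : Odd G.maxDegree) (hΔ : 3 ≤ G.maxDegree)
    (hodd : Odd (Finset.univ.filter fun v => G.degree v = G.maxDegree).card)
    (A : V → V → Prop) (hor : IsOrientation G A) :
    ¬ ConverseInvariant A :=
  stmt_10_general G hΔodd hodd A hor
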